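/- Let G̃ and G be connected reductive groups over a p-adic field F of characteristic 0 with G_der = G̃_der ⊆ G ⊆ G̃, and let G = G(F), G̃ = G̃(F). Let σ be an irreducible discrete series representation of G and let σ̃ be an irreducible admissible representation of G̃ such that σ is isomorphic to an irreducible constituent of the restriction σ̃|_G. Then G̃ acts transitively by conjugation on the set Π_{σ̃}(G) of equivalence classes of irreducible constituents of σ̃|_G; that is, for any two irreducible constituents σ₁, σ₂ of σ̃|_G there exists g̃ ∈ G̃ with {}^{g̃}σ₁ ≅ σ₂, where {}^{g̃}σ₁(x) := σ₁(g̃^{-1} x g̃). -/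

import Mathlib

/-! Common abstract framework for smooth representations used in the statements. -/

universe u v

/-- A representation of a group `G` on a complex vector space. -/
structure RepOf (G : Type u) [Group G] : Type (max u (v + 1)) where
  V : Type v
  [acg : AddCommGroup V]
  [mod : Module ℂ V]
  ρ : Representation ℂ G V

attribute [instance] RepOf.acg RepOf.mod

namespace RepOf

variable {G : Type u} [Group G]

/-- Isomorphism (equivalence) of representations. -/
def Iso (σ τ : RepOf G) : Prop :=
  ∃ e : σ.V ≃ₗ[ℂ] τ.V, ∀ (g : G) (v : σ.V), e (σ.ρ g v) = τ.ρ g (e v)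

/-- A submodule invariant under the representation. -/
def IsInvariant (σ : RepOf G) (W : Submodule ℂ σ.V) : Prop :=
  ∀ g : G, ∀ v ∈ W, σ.ρ g v ∈ W

/-- Irreducibility of a representation. -/
def Irreducible (σ : RepOf G) : Prop :=
  Nontrivial σ.V ∧ ∀ W : Submodule ℂ σ.V, σ.IsInvariant W → W = ⊥ ∨ W = ⊤

/-- `σ` occurs as a subrepresentation of `τ`; for irreducible `σ` this says that `σ`
is (isomorphic to) an irreducible constituent of `τ`. -/
def IsConstituent (σ τ : RepOf G) : Prop :=
  ∃ W : Submodule ℂ τ.V, τ.IsInvariant W ∧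
    ∃ e : σ.V ≃ₗ[ℂ] W, ∀ (g : G) (v : σ.V), ((e (σ.ρ g v) : τ.V)) = τ.ρ g ((e v : τ.V))

/-- Restriction (pullback) of a representation along a group homomorphism; for a
subgroup `H` of `G`, `σ.res H.subtype` is the restriction `σ|_H`. -/
def res {H : Type*} [Group H] (σ : RepOf G) (f : H →* G) : RepOf H :=
  { V := σ.V, ρ := σ.ρ.comp f }

/-- The conjugate representation `ᵍσ : x ↦ σ(g⁻¹ x g)` of a normal subgroup `H`,
for `g` in the ambient group. -/
def conjRes {Gt : Type u} [Group Gt] (H : Subgroup Gt) [H.Normal] (σ : RepOf ↥H)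
    (g : Gt) : RepOf ↥H :=
  { V := σ.V, ρ := σ.ρ.comp (MulAut.conjNormal (g⁻¹ : Gt) : MulAut ↥H).toMonoidHom }

/-- Twist of a representation by a character. -/
def twist (σ : RepOf G) (η : G →* ℂˣ) : RepOf G where
  V := σ.V
  ρ :=
    { toFun := fun g => (η g : ℂ) • σ.ρ g
      map_one' := by simp
      map_mul' := by
        intro g h
        ext v
        simp [Module.End.mul_apply, smul_smul, mul_comm] }

end RepOf

open RepOf

/-- `x ↦ g⁻¹ x g` maps a subgroup into itself provided `g` normalizes it. -/
theorem conj_mem_of_mem_normalizer {Gt : Type u} [Group Gt] {H : Subgroup Gt} {g : Gt}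
    (hg : g ∈ Subgroup.normalizer (H : Set Gt)) {x : Gt} (hx : x ∈ H) : g⁻¹ * x * g ∈ H := by
  have h' := Subgroup.mem_normalizer_iff.mp ((Subgroup.normalizer (H : Set Gt)).inv_mem hg) x
  rw [inv_inv] at h'
  exact h'.mp hx

/-- The conjugate representation `ᵍσ : x ↦ σ(g⁻¹ x g)` of a subgroup `H`, for `g`
an element of the ambient group carrying `H` into itself by conjugation. -/
def RepOf.conjOf {Gt : Type u} [Group Gt] (H : Subgroup Gt) (σ : RepOf ↥H) (g : Gt)
    (hg : ∀ x ∈ H, g⁻¹ * x * g ∈ H) : RepOf ↥H where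
  V := σ.V
  ρ := σ.ρ.comp
    { toFun := fun x => (⟨g⁻¹ * (x : Gt) * g, hg x x.2⟩ : ↥H)
      map_one' := by ext; simp
      map_mul' := by intro x y; ext; simp; group }

/-- The conjugate `ʷσ` of a representation of `H` by an element `w` of the
normalizer of `H`. -/
def wconj {Gt : Type u} [Group Gt] (H : Subgroup Gt) (σ : RepOf ↥H) (w : Gt)
    (hw : w ∈ Subgroup.normalizer (H : Set Gt)) : RepOf ↥H :=
  RepOf.conjOf H σ w fun _ hx => conj_mem_of_mem_normalizer hw hx

/-- Isomorphism of representations is an equivalence relation. -/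
def isoSetoid (G : Type u) [Group G] : Setoid (RepOf G) where
  r := RepOf.Iso
  iseqv := by
    constructor
    · intro σ
      exact ⟨LinearEquiv.refl ℂ σ.V, fun g v => rfl⟩
    · rintro σ τ ⟨e, he⟩
      refine ⟨e.symm, fun g v => ?_⟩
      apply e.injective
      rw [he g (e.symm v)]
      simp
    · rintro σ τ ω ⟨e, he⟩ ⟨f, hf⟩
      refine ⟨e.trans f, fun g v => ?_⟩
      simp [LinearEquiv.trans_apply, he g v, hf g (e v)]

/-- The set of equivalence classes of irreducible constituents of the restriction
`σt|_H` of a representation `σt` of the ambient group to the subgroup `H`: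
the set `Π_{σ̃}(G)` of the paper. -/
def constituentClasses {Gt : Type u} [Group Gt] (H : Subgroup Gt) (σt : RepOf Gt) :
    Set (Quotient (isoSetoid ↥H)) :=
  {c | ∃ σ₁ : RepOf ↥H, Quotient.mk (isoSetoid ↥H) σ₁ = c ∧ σ₁.Irreducible ∧
    RepOf.IsConstituent σ₁ (σt.res H.subtype)}

/-- The stabilizer `G̃_σ = {g̃ ∈ G̃ : ᵍσ ≅ σ}` of (the isomorphism class of) a
representation `σ` of a normal subgroup `G` in the ambient group `G̃`. -/
def stabSubgroup {Gt : Type u} [Group Gt] (G : Subgroup Gt) [G.Normal] (σ : RepOf ↥G) :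
    Subgroup Gt where
  carrier := {g : Gt | RepOf.Iso (RepOf.conjRes G σ g) σ}
  one_mem' := by
    refine ⟨LinearEquiv.refl ℂ σ.V, fun g v => ?_⟩
    show σ.ρ ((MulAut.conjNormal ((1 : Gt)⁻¹)) g) v = σ.ρ g v
    simp
  mul_mem' := by
    rintro a b ⟨ea, hea⟩ ⟨eb, heb⟩
    refine ⟨eb.trans ea, fun x v => ?_⟩
    have h1 : (MulAut.conjNormal ((a * b)⁻¹ : Gt)) x
        = (MulAut.conjNormal (b⁻¹ : Gt)) ((MulAut.conjNormal (a⁻¹ : Gt)) x) := by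
      rw [mul_inv_rev, map_mul]; rfl
    have hea' : ∀ (g : ↥G) (v : σ.V),
        ea (σ.ρ ((MulAut.conjNormal (a⁻¹ : Gt)) g) v) = σ.ρ g (ea v) := fun g v => hea g v
    have heb' : ∀ (g : ↥G) (v : σ.V),
        eb (σ.ρ ((MulAut.conjNormal (b⁻¹ : Gt)) g) v) = σ.ρ g (eb v) := fun g v => heb g v
    show (eb.trans ea) (σ.ρ ((MulAut.conjNormal ((a * b)⁻¹ : Gt)) x) v)
        = σ.ρ x ((eb.trans ea) v)
    rw [h1]
    change ea (eb (σ.ρ ((MulAut.conjNormal (b⁻¹ : Gt)) ((MulAut.conjNormal (a⁻¹ : Gt)) x)) v))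
        = σ.ρ x (ea (eb v))
    rw [heb' ((MulAut.conjNormal (a⁻¹ : Gt)) x) v]
    exact hea' x (eb v)
  inv_mem' := by
    rintro a ⟨ea, hea⟩
    refine ⟨ea.symm, fun x v => ?_⟩
    show ea.symm (σ.ρ ((MulAut.conjNormal ((a⁻¹)⁻¹ : Gt)) x) v) = σ.ρ x (ea.symm v)
    rw [inv_inv]
    apply ea.injective
    have h2 : (MulAut.conjNormal (a⁻¹ : Gt)) ((MulAut.conjNormal (a : Gt)) x) = x := by
      rw [← MulAut.mul_apply, ← map_mul]
      simp
    have hea' : ∀ (g : ↥G) (v : σ.V),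
        ea (σ.ρ ((MulAut.conjNormal (a⁻¹ : Gt)) g) v) = σ.ρ g (ea v) := fun g v => hea g v
    have h3 := hea' ((MulAut.conjNormal (a : Gt)) x) (ea.symm v)
    rw [h2] at h3
    rw [h3]
    exact (ea.apply_symm_apply _).trans (congrArg _ (ea.apply_symm_apply v).symm)

/-- The space of `G`-equivariant linear maps between two representations; its
dimension computes multiplicities. -/
def homSpace {G : Type u} [Group G] (σ τ : RepOf G) :
    Submodule ℂ (σ.V →ₗ[ℂ] τ.V) where
  carrier := {f | ∀ (g : G) (v : σ.V), f (σ.ρ g v) = τ.ρ g (f v)}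
  add_mem' := by intro f₁ f₂ h₁ h₂ g v; simp [h₁ g v, h₂ g v]
  zero_mem' := by intro g v; simp
  smul_mem' := by intro c f hf g v; simp [hf g v]

/- ========= auxiliary development for statement_0 ========= -/



section AuxSemisimple

variable {R : Type*} {M : Type*} [Ring R] [AddCommGroup M] [Module R M]

theorem aux_simple_le_finsetSup {ι : Type*} [DecidableEq ι] (S : ι → Submodule R M)
    (hS : ∀ i, IsSimpleModule R (S i)) (s : Finset ι) :
    ∀ W : Submodule R M, IsSimpleModule R W → W ≤ (⨆ i ∈ s, S i) →
      ∃ i, Nonempty (↥W ≃ₗ[R] ↥(S i)) := by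
  induction s using Finset.induction_on with
  | empty =>
      intro W hW hle
      exfalso
      have h0 : W = ⊥ := le_bot_iff.mp (by simpa using hle)
      exact (isSimpleModule_iff_isAtom.mp hW).1 h0
  | @insert j t hjt ih =>
      intro W hW hle
      rw [Finset.iSup_insert] at hle
      by_cases hWN : W ≤ ⨆ i ∈ t, S i
      · exact ih W hW hWN
      by_cases hSjN : S j ≤ ⨆ i ∈ t, S i
      · exact absurd (hle.trans (sup_le hSjN le_rfl)) hWN
      set N : Submodule R M := ⨆ i ∈ t, S i with hN
      have kerbot : ∀ p : Submodule R M, IsSimpleModule R p → ¬ p ≤ N →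
          LinearMap.ker (N.mkQ ∘ₗ p.subtype) = ⊥ := by
        intro p hp hpN
        haveI := hp
        rcases eq_bot_or_eq_top (LinearMap.ker (N.mkQ ∘ₗ p.subtype)) with h | h
        · exact h
        · exfalso
          apply hpN
          intro x hx
          have hm : (⟨x, hx⟩ : p) ∈ LinearMap.ker (N.mkQ ∘ₗ p.subtype) := by
            rw [h]; trivial
          simpa only [LinearMap.mem_ker, LinearMap.comp_apply, Submodule.subtype_apply,
            Submodule.mkQ_apply, Submodule.Quotient.mk_eq_zero] using hm
      have hfk := kerbot W hW hWN
      have hgk := kerbot (S j) (hS j) hSjN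
      have hfinj := LinearMap.ker_eq_bot.mp hfk
      have hginj := LinearMap.ker_eq_bot.mp hgk
      set f : W →ₗ[R] M ⧸ N := N.mkQ ∘ₗ W.subtype with hf
      set g : (S j) →ₗ[R] M ⧸ N := N.mkQ ∘ₗ (S j).subtype with hg
      have hrange : LinearMap.range f ≤ LinearMap.range g := by
        rintro x ⟨⟨w, hwW⟩, rfl⟩
        obtain ⟨a, ha, b, hb, hab⟩ := Submodule.mem_sup.mp (hle hwW)
        refine ⟨⟨a, ha⟩, ?_⟩
        show N.mkQ a = f ⟨w, hwW⟩
        have hfw : f ⟨w, hwW⟩ = N.mkQ w := rfl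
        rw [hfw, ← hab, map_add]
        have hb0 : N.mkQ b = 0 := by
          rw [Submodule.mkQ_apply, Submodule.Quotient.mk_eq_zero]; exact hb
        rw [hb0, add_zero]
      haveI := hW
      haveI : Nontrivial ↥W := IsSimpleModule.nontrivial R ↥W
      obtain ⟨w0, hw0⟩ := exists_ne (0 : W)
      have hfw0 : f w0 ≠ 0 := fun h => hw0 (hfinj (by rw [h, map_zero]))
      obtain ⟨u, hu⟩ := hrange ⟨w0, rfl⟩
      have hU : Submodule.comap g (LinearMap.range f) = ⊤ := by
        haveI := hS j
        rcases eq_bot_or_eq_top (Submodule.comap g (LinearMap.range f)) with h | h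
        · exfalso
          have hmem : u ∈ Submodule.comap g (LinearMap.range f) := by
            rw [Submodule.mem_comap, hu]; exact ⟨w0, rfl⟩
          rw [h, Submodule.mem_bot] at hmem
          apply hfw0
          rw [← hu, hmem, map_zero]
        · exact h
      have hrg : LinearMap.range g ≤ LinearMap.range f := by
        rintro x ⟨u', rfl⟩
        have : u' ∈ Submodule.comap g (LinearMap.range f) := by rw [hU]; trivial
        exact this
      have heq : LinearMap.range f = LinearMap.range g := le_antisymm hrange hrg
      exact ⟨j, ⟨(LinearEquiv.ofInjective f hfinj).trans
        ((LinearEquiv.ofEq _ _ heq).trans (LinearEquiv.ofInjective g hginj).symm)⟩⟩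

theorem aux_key {ι : Type*} (S : ι → Submodule R M)
    (hS : ∀ i, IsSimpleModule R (S i)) (hsup : (⨆ i, S i) = ⊤)
    (W : Submodule R M) (hW : IsSimpleModule R W) :
    ∃ i, Nonempty (↥W ≃ₗ[R] ↥(S i)) := by
  classical
  haveI := hW
  haveI : Nontrivial ↥W := IsSimpleModule.nontrivial R ↥W
  obtain ⟨w0, hw0⟩ := exists_ne (0 : W)
  have hw0' : (w0 : M) ∈ ⨆ i, S i := by rw [hsup]; trivial
  obtain ⟨s, hs⟩ := Submodule.exists_finset_of_mem_iSup S hw0'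
  have hspan : Submodule.span R {(w0 : M)} = W := by
    have hle : Submodule.span R {(w0 : M)} ≤ W := by
      rw [Submodule.span_le, Set.singleton_subset_iff]; exact w0.2
    rcases lt_or_eq_of_le hle with h | h
    · exfalso
      have := (isSimpleModule_iff_isAtom.mp hW).2 _ h
      rw [Submodule.span_singleton_eq_bot] at this
      exact hw0 (Subtype.ext (by simpa using this))
    · exact h
  have hWle : W ≤ ⨆ i ∈ s, S i := by
    rw [← hspan, Submodule.span_le, Set.singleton_subset_iff]; exact hs
  exact aux_simple_le_finsetSup S hS s W hW hWle

end AuxSemisimple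


section RepAux

variable {G : Type u} [Group G]

theorem aux_irreducible_of_iso {σ τ : RepOf G} (h : RepOf.Iso σ τ)
    (hσ : σ.Irreducible) : τ.Irreducible := by
  obtain ⟨e, he⟩ := h
  constructor
  · haveI := hσ.1
    exact e.symm.toEquiv.nontrivial
  · intro W hWinv
    have hU : σ.IsInvariant (W.comap (e : σ.V →ₗ[ℂ] τ.V)) := by
      intro g v hv
      rw [Submodule.mem_comap] at hv ⊢
      rw [LinearEquiv.coe_coe] at hv ⊢
      rw [he]
      exact hWinv g _ hv
    rcases hσ.2 _ hU with h | h
    · left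
      rw [eq_bot_iff]
      intro x hx
      have hmem : e.symm x ∈ W.comap (e : σ.V →ₗ[ℂ] τ.V) := by
        rw [Submodule.mem_comap, LinearEquiv.coe_coe, e.apply_symm_apply]
        exact hx
      rw [h, Submodule.mem_bot] at hmem
      have hx0 : x = 0 := by
        have := congrArg e hmem
        rwa [e.apply_symm_apply, map_zero] at this
      simp [hx0]
    · right
      rw [eq_top_iff]
      intro x _
      have hmem : e.symm x ∈ W.comap (e : σ.V →ₗ[ℂ] τ.V) := by rw [h]; trivial
      rw [Submodule.mem_comap, LinearEquiv.coe_coe, e.apply_symm_apply] at hmem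
      exact hmem

theorem aux_iso_symm {σ τ : RepOf G} (h : RepOf.Iso σ τ) : RepOf.Iso τ σ := by
  obtain ⟨e, he⟩ := h
  refine ⟨e.symm, fun g v => ?_⟩
  apply e.injective
  rw [he g (e.symm v)]
  simp

theorem aux_iso_trans {σ τ ω : RepOf G} (h1 : RepOf.Iso σ τ) (h2 : RepOf.Iso τ ω) :
    RepOf.Iso σ ω := by
  obtain ⟨e, he⟩ := h1
  obtain ⟨f, hf⟩ := h2
  refine ⟨e.trans f, fun g v => ?_⟩
  simp [LinearEquiv.trans_apply, he g v, hf g (e v)]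

end RepAux

section Bridge

variable {H : Type u} [Group H] (τ : RepOf H)

/-- The complex group algebra of `H`. -/
abbrev AuxA (H : Type u) [Group H] : Type u := MonoidAlgebra ℂ H

/-- `τ.V` as a module over the group algebra of `H`. -/
abbrev AuxM : Type v := τ.ρ.asModule

theorem aux_smul_def (r : AuxA H) (x : AuxM τ) :
    r • x = τ.ρ.asAlgebraHom r x := rfl

theorem aux_single_smul (g : H) (x : AuxM τ) :
    (MonoidAlgebra.single g (1 : ℂ)) • x = τ.ρ g x := by
  rw [aux_smul_def, Representation.asAlgebraHom_single, one_smul]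

theorem aux_algebraMap_smul (c : ℂ) (x : AuxM τ) :
    (algebraMap ℂ (AuxA H) c) • x = c • x := by
  rw [aux_smul_def, AlgHom.commutes]
  rfl

/-- An invariant subspace as a submodule over the group algebra. -/
def auxToA (W : Submodule ℂ τ.V) (hW : τ.IsInvariant W) :
    Submodule (AuxA H) (AuxM τ) where
  carrier := (W : Set τ.V)
  add_mem' := fun ha hb => W.add_mem ha hb
  zero_mem' := W.zero_mem
  smul_mem' := by
    intro r x hx
    show r • x ∈ W
    erw [aux_smul_def, Representation.asAlgebraHom_def, MonoidAlgebra.lift_apply,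
      LinearMap.finsupp_sum_apply]
    refine Submodule.finsuppSum_mem ℂ W _ _ ?_
    intro g _
    erw [LinearMap.smul_apply]
    exact W.smul_mem _ (hW g x hx)

/-- A group-algebra submodule as a plain subspace. -/
def auxFromA (U : Submodule (AuxA H) (AuxM τ)) : Submodule ℂ τ.V where
  carrier := (U : Set (AuxM τ))
  add_mem' := fun ha hb => U.add_mem ha hb
  zero_mem' := U.zero_mem
  smul_mem' := by
    intro c x hx
    have h := U.smul_mem (algebraMap ℂ (AuxA H) c) hx
    erw [aux_algebraMap_smul] at h
    exact h

/-- The representation of `H` on an invariant subspace of `τ.V`. -/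
def auxRepOn (W : Submodule ℂ τ.V) (hW : τ.IsInvariant W) : RepOf H where
  V := ↥W
  ρ := {
    toFun := fun g => (τ.ρ g).restrict (fun v hv => hW g v hv)
    map_one' := by
      apply LinearMap.ext; intro v; apply Subtype.ext
      simp only [LinearMap.restrict_coe_apply, map_one, Module.End.one_apply]
    map_mul' := by
      intro a b
      apply LinearMap.ext; intro v; apply Subtype.ext
      simp only [LinearMap.restrict_coe_apply, map_mul, Module.End.mul_apply] }

theorem aux_iso_repOn (σ₀ : RepOf H) (W : Submodule ℂ τ.V)
    (hW : τ.IsInvariant W) (e : σ₀.V ≃ₗ[ℂ] ↥W)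
    (he : ∀ g v, ((e (σ₀.ρ g v) : τ.V)) = τ.ρ g ((e v : τ.V))) :
    RepOf.Iso σ₀ (auxRepOn τ W hW) :=
  ⟨e, fun g v => Subtype.ext (he g v)⟩

theorem aux_isSimple (W : Submodule ℂ τ.V) (hW : τ.IsInvariant W)
    (hirr : (auxRepOn τ W hW).Irreducible) :
    IsSimpleModule (AuxA H) ↥(auxToA τ W hW) := by
  haveI : Nontrivial ↥(auxToA τ W hW) := by
    obtain ⟨x, y, hxy⟩ := hirr.1
    exact ⟨⟨⟨x.1, x.2⟩, ⟨y.1, y.2⟩, fun h => hxy (Subtype.ext (congrArg Subtype.val h))⟩⟩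
  rw [isSimpleModule_iff]
  constructor
  intro P
  let j : ↥W → ↥(auxToA τ W hW) := fun x => ⟨x.1, x.2⟩
  let P' : Submodule ℂ ↥W := {
    carrier := {x : ↥W | j x ∈ P}
    add_mem' := by
      intro a b ha hb
      show j (a + b) ∈ P
      have h : j (a + b) = j a + j b := Subtype.ext rfl
      rw [h]; exact P.add_mem ha hb
    zero_mem' := by
      show j 0 ∈ P
      have h : j (0 : ↥W) = 0 := Subtype.ext rfl
      rw [h]; exact P.zero_mem
    smul_mem' := by
      intro c x hx
      show j (c • x) ∈ P
      have h : j (c • x) = (algebraMap ℂ (AuxA H) c) • j x :=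
        Subtype.ext ((aux_algebraMap_smul τ c x.1).symm)
      rw [h]; exact P.smul_mem _ hx }
  have hinv : (auxRepOn τ W hW).IsInvariant P' := by
    intro g x hx
    show j ((auxRepOn τ W hW).ρ g x) ∈ P
    have h : j ((auxRepOn τ W hW).ρ g x) = (MonoidAlgebra.single g (1 : ℂ)) • j x :=
      Subtype.ext ((aux_single_smul τ g x.1).symm)
    rw [h]; exact P.smul_mem _ hx
  rcases hirr.2 P' hinv with h | h
  · left
    rw [eq_bot_iff]
    intro y hy
    have hmem : (⟨y.1, y.2⟩ : ↥W) ∈ P' := by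
      show j ⟨y.1, y.2⟩ ∈ P
      have hjy : j ⟨y.1, y.2⟩ = y := Subtype.ext rfl
      rw [hjy]; exact hy
    rw [h] at hmem
    erw [Submodule.mem_bot] at hmem
    have hy0 : y = 0 := Subtype.ext (congrArg Subtype.val hmem)
    simp [hy0]
  · right
    rw [eq_top_iff]
    intro y _
    have hmem : (⟨y.1, y.2⟩ : ↥W) ∈ P' := by rw [h]; trivial
    have hy : j ⟨y.1, y.2⟩ ∈ P := hmem
    have hjy : j ⟨y.1, y.2⟩ = y := Subtype.ext rfl
    rwa [hjy] at hy

theorem aux_iso_of_equiv (W W' : Submodule ℂ τ.V)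
    (hW : τ.IsInvariant W) (hW' : τ.IsInvariant W')
    (e : ↥(auxToA τ W hW) ≃ₗ[AuxA H] ↥(auxToA τ W' hW')) :
    RepOf.Iso (auxRepOn τ W hW) (auxRepOn τ W' hW') := by
  refine ⟨{
    toFun := fun x => ⟨(e ⟨x.1, x.2⟩).1, (e ⟨x.1, x.2⟩).2⟩
    invFun := fun y => ⟨(e.symm ⟨y.1, y.2⟩).1, (e.symm ⟨y.1, y.2⟩).2⟩
    left_inv := fun x => Subtype.ext (congrArg Subtype.val (e.symm_apply_apply ⟨x.1, x.2⟩))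
    right_inv := fun y => Subtype.ext (congrArg Subtype.val (e.apply_symm_apply ⟨y.1, y.2⟩))
    map_add' := fun x y => Subtype.ext (congrArg Subtype.val (map_add e ⟨x.1, x.2⟩ ⟨y.1, y.2⟩))
    map_smul' := fun c x => by
      have h1 : (⟨(c • x).1, (c • x).2⟩ : ↥(auxToA τ W hW))
          = (algebraMap ℂ (AuxA H) c) • (⟨x.1, x.2⟩ : ↥(auxToA τ W hW)) :=
        Subtype.ext ((aux_algebraMap_smul τ c x.1).symm)
      have h2 : e ⟨(c • x).1, (c • x).2⟩
          = (algebraMap ℂ (AuxA H) c) • e ⟨x.1, x.2⟩ := by rw [h1, map_smul]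
      exact Subtype.ext ((congrArg Subtype.val h2).trans
        (aux_algebraMap_smul τ c ((e ⟨x.1, x.2⟩ : ↥(auxToA τ W' hW')) : AuxM τ))) }, ?_⟩
  intro g v
  have h1 : (⟨((auxRepOn τ W hW).ρ g v).1, ((auxRepOn τ W hW).ρ g v).2⟩ :
      ↥(auxToA τ W hW)) = (MonoidAlgebra.single g (1 : ℂ)) •
        (⟨v.1, v.2⟩ : ↥(auxToA τ W hW)) :=
    Subtype.ext ((aux_single_smul τ g v.1).symm)
  have h2 : e ⟨((auxRepOn τ W hW).ρ g v).1, ((auxRepOn τ W hW).ρ g v).2⟩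
      = (MonoidAlgebra.single g (1 : ℂ)) • e ⟨v.1, v.2⟩ := by rw [h1, map_smul]
  exact Subtype.ext ((congrArg Subtype.val h2).trans
    (aux_single_smul τ g ((e ⟨v.1, v.2⟩ : ↥(auxToA τ W' hW')) : AuxM τ)))

end Bridge

section ConjBridge

variable {Gt : Type u} [Group Gt] (G : Subgroup Gt) [G.Normal] (τ : RepOf ↥G)

theorem aux_conjNormal_cancel (g : Gt) (y : ↥G) :
    (MulAut.conjNormal (g⁻¹ : Gt)) ((MulAut.conjNormal (g : Gt)) y) = y := by
  rw [← MulAut.mul_apply, ← map_mul]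
  simp

theorem aux_irreducible_conjRes {σ : RepOf ↥G} (g : Gt) (hσ : σ.Irreducible) :
    (RepOf.conjRes G σ g).Irreducible := by
  refine ⟨hσ.1, ?_⟩
  intro W hW
  apply hσ.2 W
  intro y v hv
  have h1 := hW ((MulAut.conjNormal (g : Gt)) y) v hv
  have h2 : (RepOf.conjRes G σ g).ρ ((MulAut.conjNormal (g : Gt)) y) v = σ.ρ y v := by
    show σ.ρ ((MulAut.conjNormal (g⁻¹ : Gt)) ((MulAut.conjNormal (g : Gt)) y)) v = σ.ρ y v
    rw [aux_conjNormal_cancel]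
  rwa [h2] at h1

theorem aux_iso_conjRes_of_iso {σ σ' : RepOf ↥G} (g : Gt) (h : RepOf.Iso σ σ') :
    RepOf.Iso (RepOf.conjRes G σ g) (RepOf.conjRes G σ' g) := by
  obtain ⟨e, he⟩ := h
  exact ⟨e, fun x v => he _ v⟩

theorem aux_conj_invariant (g : Gt) (T : τ.V ≃ₗ[ℂ] τ.V)
    (hT : ∀ (x : ↥G) (v : τ.V),
      T (τ.ρ ((MulAut.conjNormal (g⁻¹ : Gt)) x) v) = τ.ρ x (T v))
    (W : Submodule ℂ τ.V) (hW : τ.IsInvariant W) :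
    τ.IsInvariant (W.map (T : τ.V →ₗ[ℂ] τ.V)) := by
  rintro x v ⟨w, hw, rfl⟩
  exact ⟨τ.ρ ((MulAut.conjNormal (g⁻¹ : Gt)) x) w, hW _ w hw, hT x w⟩

theorem aux_iso_conj (g : Gt) (T : τ.V ≃ₗ[ℂ] τ.V)
    (hT : ∀ (x : ↥G) (v : τ.V),
      T (τ.ρ ((MulAut.conjNormal (g⁻¹ : Gt)) x) v) = τ.ρ x (T v))
    (W : Submodule ℂ τ.V) (hW : τ.IsInvariant W) :
    RepOf.Iso (RepOf.conjRes G (auxRepOn τ W hW) g)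
      (auxRepOn τ (W.map (T : τ.V →ₗ[ℂ] τ.V)) (aux_conj_invariant G τ g T hT W hW)) := by
  exact ⟨T.submoduleMap W, fun x v => Subtype.ext (hT x v.1)⟩

end ConjBridge

/-- Let `G̃`, `G` be (the `F`-points of) connected reductive groups over a
`p`-adic field `F` of characteristic `0` with `G_der = G̃_der ⊆ G ⊆ G̃` (so that `G` is a
normal subgroup of `G̃` containing the commutator subgroup).  Let `σ` be an irreducible
discrete series representation of `G` and `σ̃` an irreducible admissible representation
of `G̃` such that `σ` is an irreducible constituent of `σ̃|_G`.  Then `G̃` acts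
transitively by conjugation on the set `Π_{σ̃}(G)` of irreducible constituents of
`σ̃|_G`:  for any two irreducible constituents `σ₁`, `σ₂` of `σ̃|_G` there is `g̃ ∈ G̃`
with `ᵍ̃σ₁ ≅ σ₂`.  (The analytic notions "discrete series" and "admissible" are carried
along as abstract predicates.) -/
theorem statement_0
    {Gt : Type u} [Group Gt] (G : Subgroup Gt) [G.Normal]
    -- `G̃_der = G_der` and `G̃_der ⊆ G ⊆ G̃` :
    (hder_le : commutator Gt ≤ G)
    (hder_eq : Subgroup.map G.subtype (commutator ↥G) = commutator Gt)
    -- abstract placeholders for the analytic notions :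
    (IsDiscreteSeries : RepOf ↥G → Prop) (IsAdmissible : RepOf Gt → Prop)
    (σ : RepOf ↥G) (σt : RepOf Gt)
    (hσ_irr : σ.Irreducible) (hσ_ds : IsDiscreteSeries σ)
    (hσt_irr : σt.Irreducible) (hσt_adm : IsAdmissible σt)
    (hσ_con : RepOf.IsConstituent σ (σt.res G.subtype))
    -- two irreducible constituents of `σ̃|_G` :
    (σ₁ σ₂ : RepOf ↥G)
    (h₁irr : σ₁.Irreducible) (h₂irr : σ₂.Irreducible)
    (h₁con : RepOf.IsConstituent σ₁ (σt.res G.subtype))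
    (h₂con : RepOf.IsConstituent σ₂ (σt.res G.subtype)) :
    ∃ g : Gt, RepOf.Iso (RepOf.conjRes G σ₁ g) σ₂ := by
  classical
  set τ : RepOf ↥G := σt.res G.subtype with hτ
  obtain ⟨W₁, hW₁, e₁, he₁⟩ := h₁con
  obtain ⟨W₂, hW₂, e₂, he₂⟩ := h₂con
  have hiso₁ : RepOf.Iso σ₁ (auxRepOn τ W₁ hW₁) := aux_iso_repOn τ σ₁ W₁ hW₁ e₁ he₁
  have hiso₂ : RepOf.Iso σ₂ (auxRepOn τ W₂ hW₂) := aux_iso_repOn τ σ₂ W₂ hW₂ e₂ he₂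
  have hirr₁ : (auxRepOn τ W₁ hW₁).Irreducible := aux_irreducible_of_iso hiso₁ h₁irr
  have hirr₂ : (auxRepOn τ W₂ hW₂).Irreducible := aux_irreducible_of_iso hiso₂ h₂irr
  -- conjugation equivalences on the ambient space
  let T : Gt → (τ.V ≃ₗ[ℂ] τ.V) := fun g => LinearEquiv.ofLinear (σt.ρ g) (σt.ρ g⁻¹)
    (by
      apply LinearMap.ext
      intro v
      revert v
      show ∀ v : σt.V, σt.ρ g (σt.ρ g⁻¹ v) = v
      intro v
      rw [← Module.End.mul_apply, ← map_mul σt.ρ g g⁻¹, mul_inv_cancel, map_one,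
        Module.End.one_apply])
    (by
      apply LinearMap.ext
      intro v
      revert v
      show ∀ v : σt.V, σt.ρ g⁻¹ (σt.ρ g v) = v
      intro v
      rw [← Module.End.mul_apply, ← map_mul σt.ρ g⁻¹ g, inv_mul_cancel, map_one,
        Module.End.one_apply])
  have hT : ∀ (g : Gt) (x : ↥G) (v : τ.V),
      (T g) (τ.ρ ((MulAut.conjNormal (g⁻¹ : Gt)) x) v) = τ.ρ x ((T g) v) := by
    intro g x v
    revert v
    show ∀ v : σt.V, σt.ρ g (σt.ρ ((((MulAut.conjNormal (g⁻¹ : Gt)) x : ↥G) : Gt)) v)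
        = σt.ρ (x : Gt) (σt.ρ g v)
    intro v
    rw [MulAut.conjNormal_apply, inv_inv, ← Module.End.mul_apply, ← Module.End.mul_apply,
      ← map_mul, ← map_mul]
    congr 2
    group
  set Sg : Gt → Submodule ℂ τ.V := fun g => W₁.map ((T g : τ.V →ₗ[ℂ] τ.V)) with hSg
  have hSinv : ∀ g : Gt, τ.IsInvariant (Sg g) := fun g =>
    aux_conj_invariant G τ g (T g) (hT g) W₁ hW₁
  have hconjIso : ∀ g : Gt, RepOf.Iso (RepOf.conjRes G (auxRepOn τ W₁ hW₁) g)
      (auxRepOn τ (Sg g) (hSinv g)) := fun g => aux_iso_conj G τ g (T g) (hT g) W₁ hW₁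
  have hSirr : ∀ g : Gt, (auxRepOn τ (Sg g) (hSinv g)).Irreducible := fun g =>
    aux_irreducible_of_iso (hconjIso g) (aux_irreducible_conjRes G g hirr₁)
  -- Clifford: the sum of the conjugates is everything
  have hW₁ne : W₁ ≠ ⊥ := by
    obtain ⟨x, y, hxy⟩ := h₁irr.1
    refine (Submodule.ne_bot_iff W₁).mpr ⟨(e₁ x).1 - (e₁ y).1,
      W₁.sub_mem (e₁ x).2 (e₁ y).2, fun h0 => ?_⟩
    exact hxy (e₁.injective (Subtype.ext (sub_eq_zero.mp h0)))
  have hNinv : σt.IsInvariant (⨆ g : Gt, Sg g) := by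
    intro h v hv
    have hle : (⨆ g : Gt, Sg g).map (σt.ρ h) ≤ ⨆ g : Gt, Sg g := by
      refine (Submodule.map_iSup (σt.ρ h) Sg).trans_le ?_
      apply iSup_le
      intro g
      have hmm : (Sg g).map (σt.ρ h) = Sg (h * g) := by
        show (W₁.map ((T g : τ.V →ₗ[ℂ] τ.V))).map (σt.ρ h) = W₁.map ((T (h * g) : τ.V →ₗ[ℂ] τ.V))
        refine (Submodule.map_comp (T g : τ.V →ₗ[ℂ] τ.V) (σt.ρ h) W₁).symm.trans ?_
        congr 1
        show σt.ρ h ∘ₗ σt.ρ g = σt.ρ (h * g)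
        rw [map_mul]
        rfl
      rw [hmm]
      exact le_iSup Sg (h * g)
    exact hle (Submodule.mem_map_of_mem hv)
  have hW₁le : W₁ ≤ ⨆ g : Gt, Sg g := by
    have hS1 : Sg 1 = W₁ := by
      show W₁.map ((T 1 : τ.V →ₗ[ℂ] τ.V)) = W₁
      have hT1 : ((T 1 : τ.V →ₗ[ℂ] τ.V)) = LinearMap.id := by
        show σt.ρ (1 : Gt) = LinearMap.id
        rw [map_one]
        rfl
      rw [hT1, Submodule.map_id]
    rw [← hS1]
    exact le_iSup Sg 1
  have hNtop : (⨆ g : Gt, Sg g) = ⊤ := by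
    rcases hσt_irr.2 _ hNinv with h | h
    · exfalso
      apply hW₁ne
      rw [eq_bot_iff]
      have hW₁le := hW₁le.trans h.le
      exact hW₁le
    · exact h
  -- transfer to group-algebra modules
  have hsupA : (⨆ g : Gt, auxToA τ (Sg g) (hSinv g)) = ⊤ := by
    rw [eq_top_iff]
    intro x _
    have hx : x ∈ (⨆ g : Gt, Sg g) := by rw [hNtop]; trivial
    have hsub : (⨆ g : Gt, Sg g) ≤ auxFromA τ (⨆ g : Gt, auxToA τ (Sg g) (hSinv g)) := by
      apply iSup_le
      intro g y hy
      have hy' : y ∈ auxToA τ (Sg g) (hSinv g) := hy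
      exact le_iSup (fun g : Gt => auxToA τ (Sg g) (hSinv g)) g hy'
    exact hsub hx
  obtain ⟨g, ⟨eA⟩⟩ := aux_key (fun g : Gt => auxToA τ (Sg g) (hSinv g))
    (fun g => aux_isSimple τ (Sg g) (hSinv g) (hSirr g)) hsupA
    (auxToA τ W₂ hW₂) (aux_isSimple τ W₂ hW₂ hirr₂)
  have hIso12 : RepOf.Iso (auxRepOn τ W₂ hW₂) (auxRepOn τ (Sg g) (hSinv g)) :=
    aux_iso_of_equiv τ W₂ (Sg g) hW₂ (hSinv g) eA
  have c1 : RepOf.Iso (RepOf.conjRes G σ₁ g) (RepOf.conjRes G (auxRepOn τ W₁ hW₁) g) :=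
    aux_iso_conjRes_of_iso G g hiso₁
  exact ⟨g, aux_iso_trans (aux_iso_trans c1 (hconjIso g))
    (aux_iso_trans (aux_iso_symm hIso12) (aux_iso_symm hiso₂))⟩
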